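/- Let A, B, σ₁, σ₂ be positive real numbers and ρ ∈ [-1,1], let λ₂ᵐⁱⁿ = 1/2 + Aσ₂ρ/(2Bσ₁), and suppose A²σ₂² ≤ B²σ₁². Then B²·Σ₂(λ₂ᵐⁱⁿ) - σ₁² = A²σ₂²/B² - (A²σ₂²/B²)·ρ²/2 - (A/B)σ₁σ₂ρ - σ₁²/2, and this quantity is strictly negative if and only if ρ > √2 - Bσ₁/(Aσ₂). In particular, when ρ exceeds this threshold, the optimized double Monte Carlo ratio estimator has strictly smaller asymptotic variance than the single Monte Carlo estimator with known denominator. -/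
import Mathlib


/-- Asymptotic variance of the ratio estimator in the regime `N = λ N'`. -/
noncomputable def Sigma2 (A B σ₁ σ₂ ρ lam : ℝ) : ℝ :=
  (1 / B ^ 2) * ((2 * lam ^ 2 - 2 * lam + 1) * σ₁ ^ 2 + (A ^ 2 / B ^ 2) * σ₂ ^ 2
    - 2 * lam * (A / B) * σ₁ * σ₂ * ρ)

theorem stmt4 (A B σ₁ σ₂ ρ : ℝ) (hA : 0 < A) (hB : 0 < B) (hσ₁ : 0 < σ₁) (hσ₂ : 0 < σ₂)
    (hρ : ρ ∈ Set.Icc (-1 : ℝ) 1) (hcond : A ^ 2 * σ₂ ^ 2 ≤ B ^ 2 * σ₁ ^ 2) :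
    B ^ 2 * Sigma2 A B σ₁ σ₂ ρ (1 / 2 + A * σ₂ * ρ / (2 * B * σ₁)) - σ₁ ^ 2
      = A ^ 2 * σ₂ ^ 2 / B ^ 2 - (A ^ 2 * σ₂ ^ 2 / B ^ 2) * ρ ^ 2 / 2
        - (A / B) * σ₁ * σ₂ * ρ - σ₁ ^ 2 / 2 ∧
    (B ^ 2 * Sigma2 A B σ₁ σ₂ ρ (1 / 2 + A * σ₂ * ρ / (2 * B * σ₁)) - σ₁ ^ 2 < 0 ↔
      Real.sqrt 2 - B * σ₁ / (A * σ₂) < ρ) := by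
  obtain ⟨hρ1, hρ2⟩ := hρ
  have hB0 : (B : ℝ) ≠ 0 := ne_of_gt hB
  have hσ₁0 : (σ₁ : ℝ) ≠ 0 := ne_of_gt hσ₁
  have h1 : B ^ 2 * Sigma2 A B σ₁ σ₂ ρ (1 / 2 + A * σ₂ * ρ / (2 * B * σ₁)) - σ₁ ^ 2
      = A ^ 2 * σ₂ ^ 2 / B ^ 2 - (A ^ 2 * σ₂ ^ 2 / B ^ 2) * ρ ^ 2 / 2
        - (A / B) * σ₁ * σ₂ * ρ - σ₁ ^ 2 / 2 := by
    unfold Sigma2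
    field_simp
    ring
  refine ⟨h1, ?_⟩
  rw [h1]
  have hAσ : 0 < A * σ₂ := mul_pos hA hσ₂
  have hBσ : 0 < B * σ₁ := mul_pos hB hσ₁
  have hx : A * σ₂ ≤ B * σ₁ := by
    nlinarith [mul_pos hAσ hBσ]
  have hs : Real.sqrt 2 ^ 2 = 2 := Real.sq_sqrt (by norm_num)
  have hs0 : 0 ≤ Real.sqrt 2 := Real.sqrt_nonneg 2
  have hs1 : 1 ≤ Real.sqrt 2 := by nlinarith
  have hB2 : (0:ℝ) < 2 * B ^ 2 := by positivity
  have key : (A ^ 2 * σ₂ ^ 2 / B ^ 2 - (A ^ 2 * σ₂ ^ 2 / B ^ 2) * ρ ^ 2 / 2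
        - (A / B) * σ₁ * σ₂ * ρ - σ₁ ^ 2 / 2)
      = -((A * σ₂ * ρ + B * σ₁) ^ 2 - 2 * (A * σ₂) ^ 2) / (2 * B ^ 2) := by
    field_simp
    ring
  rw [key]
  have hlt : -((A * σ₂ * ρ + B * σ₁) ^ 2 - 2 * (A * σ₂) ^ 2) / (2 * B ^ 2) < 0 ↔
      2 * (A * σ₂) ^ 2 < (A * σ₂ * ρ + B * σ₁) ^ 2 := by
    rw [div_lt_iff₀ hB2]
    constructor <;> intro h <;> nlinarith
  rw [hlt]
  have hiff : Real.sqrt 2 - B * σ₁ / (A * σ₂) < ρ ↔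
      Real.sqrt 2 * (A * σ₂) - B * σ₁ < ρ * (A * σ₂) := by
    rw [show Real.sqrt 2 - B * σ₁ / (A * σ₂)
        = (Real.sqrt 2 * (A * σ₂) - B * σ₁) / (A * σ₂) by field_simp,
      div_lt_iff₀ hAσ]
  rw [hiff]
  clear h1 key hlt hiff
  have h5 : A * σ₂ * (-1) ≤ A * σ₂ * ρ := mul_le_mul_of_nonneg_left hρ1 hAσ.le
  have hpos : 0 ≤ A * σ₂ * ρ + B * σ₁ := by linarith
  have h7 : A * σ₂ ≤ Real.sqrt 2 * (A * σ₂) := le_mul_of_one_le_left hAσ.le hs1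
  have hid : (A * σ₂ * ρ + B * σ₁ - Real.sqrt 2 * (A * σ₂))
      * (A * σ₂ * ρ + B * σ₁ + Real.sqrt 2 * (A * σ₂))
      = (A * σ₂ * ρ + B * σ₁) ^ 2 - 2 * (A * σ₂) ^ 2 := by
    linear_combination (-(A * σ₂) ^ 2) * hs
  constructor
  · intro h
    have h8 : 0 < (A * σ₂ * ρ + B * σ₁ - Real.sqrt 2 * (A * σ₂))
        * (A * σ₂ * ρ + B * σ₁ + Real.sqrt 2 * (A * σ₂)) := by rw [hid]; linarith
    rcases mul_pos_iff.mp h8 with ⟨h9, _⟩ | ⟨_, h10⟩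
    · linarith
    · linarith
  · intro h
    have h9 : Real.sqrt 2 * (A * σ₂) < A * σ₂ * ρ + B * σ₁ := by linarith
    have h10 : 0 ≤ Real.sqrt 2 * (A * σ₂) := by linarith
    have h11 := mul_self_lt_mul_self h10 h9
    have h12 : Real.sqrt 2 * (A * σ₂) * (Real.sqrt 2 * (A * σ₂)) = 2 * (A * σ₂) ^ 2 := by
      linear_combination (A * σ₂) ^ 2 * hs
    have h13 : (A * σ₂ * ρ + B * σ₁) * (A * σ₂ * ρ + B * σ₁)
        = (A * σ₂ * ρ + B * σ₁) ^ 2 := (sq (A * σ₂ * ρ + B * σ₁)).symm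
    linarith
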